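/- arXiv:1604.07498 — 3 statements merged into one kernel-verified Lean document; each statement's English description precedes it below -/
import Mathlib

section
/- For a unit vector x = (x₀,x₁,x₂,x₃) ∈ ℂ⁴ with density matrix ρ = x xᴴ, the two partial traces Tr₀ρ and Tr₁ρ (2×2 matrices) have the same pair of eigenvalues, namely λ₀ = (1 - s)/2 and λ₁ = (1 + s)/2 where s = √(1 - 4|x₀x₃ - x₁x₂|²). -/
/-!
Both partial traces of `x xᴴ` are 2×2 matrices with trace `‖x‖² = 1` and determinant
`|x₀x₃ - x₁x₂|²` (Lagrange's identity), so both characteristic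
polynomials equal `X² - X + |x₀x₃ - x₁x₂|²`. The bound `2|x₀x₃ - x₁x₂| ≤ ‖x‖²` (AM-GM) makes
the discriminant `1 - 4|x₀x₃ - x₁x₂|²` nonnegative, whence the real roots `(1 ± s)/2`.
-/

open Matrix Polynomial ComplexConjugate

theorem Polynomial.X_sq_sub_X_add_C_eq_mul {K : Type*} [Field K] [NeZero (2 : K)] {d s : K}
    (hs : s ^ 2 = 1 - 4 * d) :
    (X ^ 2 - X + C d : K[X]) = (X - C ((1 - s) / 2)) * (X - C ((1 + s) / 2)) := by
  have hsum : C ((1 - s) / 2) + C ((1 + s) / 2) = (1 : K[X]) := by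
    rw [← C_add, ← C_1]
    congr 1
    field_simp
    ring
  have hprod : C ((1 - s) / 2) * C ((1 + s) / 2) = (C d : K[X]) := by
    rw [← C_mul]
    congr 1
    field_simp
    linear_combination -hs
  linear_combination X * hsum - hprod

theorem Complex.four_mul_normSq_mul_sub_mul_le (a b c d : ℂ) :
    4 * normSq (a * d - b * c) ≤ (normSq a + normSq b + normSq c + normSq d) ^ 2 := by
  have htri : ‖a * d - b * c‖ ≤ ‖a‖ * ‖d‖ + ‖b‖ * ‖c‖ := by
    simpa only [norm_mul] using norm_sub_le (a * d) (b * c)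
  have hamgm : 2 * ‖a * d - b * c‖ ≤ ‖a‖ ^ 2 + ‖b‖ ^ 2 + ‖c‖ ^ 2 + ‖d‖ ^ 2 := by
    nlinarith [sq_nonneg (‖a‖ - ‖d‖), sq_nonneg (‖b‖ - ‖c‖)]
  simp only [← Complex.sq_norm]
  nlinarith [norm_nonneg (a * d - b * c)]

theorem charpoly_partialTrace_eq (a b c d : ℂ)
    (h : Complex.normSq a + Complex.normSq b + Complex.normSq c + Complex.normSq d = 1) :
    (!![a * conj a + b * conj b, a * conj c + b * conj d;
        c * conj a + d * conj b, c * conj c + d * conj d] : Matrix (Fin 2) (Fin 2) ℂ).charpoly =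
      X ^ 2 - X + C (Complex.normSq (a * d - b * c) : ℂ) := by
  have htrace : a * conj a + b * conj b + (c * conj c + d * conj d) = 1 := by
    simp only [Complex.mul_conj]
    exact_mod_cast (add_assoc _ _ _).symm.trans h
  have hdet : (a * conj a + b * conj b) * (c * conj c + d * conj d)
      - (a * conj c + b * conj d) * (c * conj a + d * conj b) = Complex.normSq (a * d - b * c) := by
    rw [← Complex.mul_conj, map_sub, map_mul, map_mul]
    ring
  rw [charpoly_fin_two, trace_fin_two_of, det_fin_two_of, htrace, hdet, C_1, one_mul]

/-- For a unit vector x ∈ ℂ⁴ with density matrix ρ = x xᴴ, the two partial traces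
have the same eigenvalues l₀ = (1-s)/2 and l₁ = (1+s)/2, s = √(1-4|x₀x₃-x₁x₂|²):
their characteristic polynomials both factor as (X - l₀)(X - l₁). -/
theorem stmt_14 (x₀ x₁ x₂ x₃ : ℂ)
    (h : Complex.normSq x₀ + Complex.normSq x₁ + Complex.normSq x₂ + Complex.normSq x₃ = 1) :
    let c := starRingEnd ℂ
    let tr0 : Matrix (Fin 2) (Fin 2) ℂ :=
      !![x₀ * c x₀ + x₁ * c x₁, x₀ * c x₂ + x₁ * c x₃;
         x₂ * c x₀ + x₃ * c x₁, x₂ * c x₂ + x₃ * c x₃]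
    let tr1 : Matrix (Fin 2) (Fin 2) ℂ :=
      !![x₀ * c x₀ + x₂ * c x₂, x₀ * c x₁ + x₂ * c x₃;
         x₁ * c x₀ + x₃ * c x₂, x₁ * c x₁ + x₃ * c x₃]
    let s : ℝ := Real.sqrt (1 - 4 * Complex.normSq (x₀ * x₃ - x₁ * x₂))
    let l₀ : ℂ := (((1 - s) / 2 : ℝ) : ℂ)
    let l₁ : ℂ := (((1 + s) / 2 : ℝ) : ℂ)
    tr0.charpoly = (X - C l₀) * (X - C l₁) ∧
    tr1.charpoly = (X - C l₀) * (X - C l₁) := by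
  intro c tr0 tr1 s l₀ l₁
  have hdisc : 4 * Complex.normSq (x₀ * x₃ - x₁ * x₂) ≤ 1 := by
    simpa [h] using Complex.four_mul_normSq_mul_sub_mul_le x₀ x₁ x₂ x₃
  have hfactor : X ^ 2 - X + C (Complex.normSq (x₀ * x₃ - x₁ * x₂) : ℂ) = (X - C l₀) * (X - C l₁) := by
    simp only [l₀, l₁, Complex.ofReal_div, Complex.ofReal_sub, Complex.ofReal_add,
      Complex.ofReal_one, Complex.ofReal_ofNat]
    refine X_sq_sub_X_add_C_eq_mul ?_
    exact_mod_cast Real.sq_sqrt (by linarith)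
  have hswap : Complex.normSq x₀ + Complex.normSq x₂ + Complex.normSq x₁ + Complex.normSq x₃ = 1 := by
    linarith
  refine ⟨(charpoly_partialTrace_eq x₀ x₁ x₂ x₃ h).trans hfactor, ?_⟩
  rw [← hfactor, show x₀ * x₃ - x₁ * x₂ = x₀ * x₃ - x₂ * x₁ by ring]
  exact charpoly_partialTrace_eq x₀ x₂ x₁ x₃ hswap
end

section
/- If U is a 2×2 unitary matrix, then |t((U ⊗ I₂)x)| = |t(x)| = |t((I₂ ⊗ U)x)| for every x ∈ ℂ⁴, where t(x) = x₀x₃ - x₁x₂. Consequently the entanglement measure ν(x) = √(1 + 2|t(x)|) - 1 is invariant under local unitary operations. -/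
/-!
Reshape x ∈ ℂ² ⊗ ℂ² into the matrix X = !![x₀, x₁; x₂, x₃], so that t(x) = det X. The local
operations U ⊗ I₂ and I₂ ⊗ U act as X ↦ U * X and X ↦ X * Uᵀ, hence multiply t by det U, which
has modulus one for unitary U.
-/

open Matrix

theorem Matrix.norm_det_eq_one_of_conjTranspose_mul_self {n 𝕜 : Type*} [Fintype n]
    [DecidableEq n] [RCLike 𝕜] {U : Matrix n n 𝕜} (hU : Uᴴ * U = 1) : ‖U.det‖ = 1 :=
  CStarRing.norm_of_mem_unitary <| det_of_mem_unitary <| mem_unitaryGroup_iff'.mpr hU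

section TwoByTwo

variable {R : Type*} [CommRing R] (U : Matrix (Fin 2) (Fin 2) R) (x₀ x₁ x₂ x₃ : R)

theorem Matrix.det_fin_two_mul_expanded :
    (U 0 0 * x₀ + U 0 1 * x₂) * (U 1 0 * x₁ + U 1 1 * x₃)
      - (U 0 0 * x₁ + U 0 1 * x₃) * (U 1 0 * x₀ + U 1 1 * x₂)
      = U.det * (x₀ * x₃ - x₁ * x₂) := by
  have h := det_mul !![U 0 0, U 0 1; U 1 0, U 1 1] !![x₀, x₁; x₂, x₃]
  rw [mul_fin_two, det_fin_two_of, det_fin_two_of, det_fin_two_of] at h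
  rw [det_fin_two]
  exact h

theorem Matrix.det_fin_two_mul_transpose_expanded :
    (U 0 0 * x₀ + U 0 1 * x₁) * (U 1 0 * x₂ + U 1 1 * x₃)
      - (U 1 0 * x₀ + U 1 1 * x₁) * (U 0 0 * x₂ + U 0 1 * x₃)
      = U.det * (x₀ * x₃ - x₁ * x₂) := by
  have h := det_mul !![x₀, x₁; x₂, x₃] !![U 0 0, U 1 0; U 0 1, U 1 1]
  rw [mul_fin_two, det_fin_two_of, det_fin_two_of, det_fin_two_of] at h
  rw [det_fin_two]
  linear_combination h

end TwoByTwo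

/-- For unitary U, |t((U⊗I₂)x)| = |t(x)| = |t((I₂⊗U)x)|; hence the entanglement
measure ν(x) = √(1 + 2|t(x)|) - 1 is invariant under local unitaries. -/
theorem stmt_17 (U : Matrix (Fin 2) (Fin 2) ℂ) (hU : Uᴴ * U = 1) (x₀ x₁ x₂ x₃ : ℂ) :
    let tL : ℂ := (U 0 0 * x₀ + U 0 1 * x₂) * (U 1 0 * x₁ + U 1 1 * x₃)
        - (U 0 0 * x₁ + U 0 1 * x₃) * (U 1 0 * x₀ + U 1 1 * x₂)
    let tR : ℂ := (U 0 0 * x₀ + U 0 1 * x₁) * (U 1 0 * x₂ + U 1 1 * x₃)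
        - (U 1 0 * x₀ + U 1 1 * x₁) * (U 0 0 * x₂ + U 0 1 * x₃)
    let t : ℂ := x₀ * x₃ - x₁ * x₂
    (‖tL‖ = ‖t‖ ∧ ‖tR‖ = ‖t‖) ∧
    (Real.sqrt (1 + 2 * ‖tL‖) - 1 = Real.sqrt (1 + 2 * ‖t‖) - 1 ∧
     Real.sqrt (1 + 2 * ‖tR‖) - 1 = Real.sqrt (1 + 2 * ‖t‖) - 1) := by
  intro tL tR t
  have hdet := norm_det_eq_one_of_conjTranspose_mul_self hU
  have hL : ‖tL‖ = ‖t‖ := by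
    rw [show tL = U.det * t from det_fin_two_mul_expanded U x₀ x₁ x₂ x₃, norm_mul, hdet, one_mul]
  have hR : ‖tR‖ = ‖t‖ := by
    rw [show tR = U.det * t from det_fin_two_mul_transpose_expanded U x₀ x₁ x₂ x₃, norm_mul, hdet,
      one_mul]
  exact ⟨⟨hL, hR⟩, by rw [hL], by rw [hR]⟩
end

section
/- For a unit vector x ∈ ℂ⁴ with density matrix ρ = x xᴴ, the reduced von Neumann entropy E(Tr₀ρ) = -λ₀ log₂ λ₀ - λ₁ log₂ λ₁ (with λ₀, λ₁ the eigenvalues of Tr₀ρ) equals 0 if and only if x₀x₃ = x₁x₂, i.e., if and only if x is separable. -/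
/-!
Since `l₁ = 1 - l₀`, the entropy is `binEntropy l₀ / log 2`, which vanishes exactly when
`l₀ ∈ {0, 1}`, i.e. when `s = 1`, i.e. when the determinant `x₀ x₃ - x₁ x₂` vanishes.
A vanishing determinant means the `2 × 2` matrix `(xᵢⱼ)` has rank at most one, so it factors as
`a bᵀ`; rescaling `a` and `b` by reciprocal reals makes both unit vectors.
-/

open Real

lemma binEntropy_div_log_two_eq (p : ℝ) :
    binEntropy p / log 2 = -(p * logb 2 p) - (1 - p) * logb 2 (1 - p) := by
  simp only [binEntropy, logb, log_inv]
  ring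

lemma binEntropy_one_sub_sqrt_div_two_eq_zero_iff (t : ℝ) :
    binEntropy ((1 - √t) / 2) = 0 ↔ t = 1 := by
  have hs := sqrt_nonneg t
  rw [binEntropy_eq_zero]
  constructor
  · rintro (h | h)
    · exact sqrt_eq_one.mp (by linarith)
    · linarith
  · rintro rfl
    simp

lemma exists_mul_eq_of_mul_eq_mul {K : Type*} [Field K] {x₀ x₁ x₂ x₃ : K}
    (hdet : x₀ * x₃ = x₁ * x₂) :
    ∃ a₀ a₁ b₀ b₁ : K, x₀ = a₀ * b₀ ∧ x₁ = a₀ * b₁ ∧ x₂ = a₁ * b₀ ∧ x₃ = a₁ * b₁ := by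
  by_cases h₀ : x₀ = 0
  · subst h₀
    rcases mul_eq_zero.mp (hdet.symm.trans (zero_mul x₃)) with h₁ | h₂
    · exact ⟨0, 1, x₂, x₃, by simp, by simp [h₁], by simp, by simp⟩
    · exact ⟨x₁, x₃, 0, 1, by simp, by simp, by simp [h₂], by simp⟩
  · refine ⟨1, x₂ / x₀, x₀, x₁, by simp, by simp, by field_simp, ?_⟩
    field_simp
    linear_combination hdet

lemma exists_normSq_add_normSq_eq_one_of_mul_eq {x₀ x₁ x₂ x₃ a₀ a₁ b₀ b₁ : ℂ}
    (h : Complex.normSq x₀ + Complex.normSq x₁ + Complex.normSq x₂ + Complex.normSq x₃ = 1)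
    (e₀ : x₀ = a₀ * b₀) (e₁ : x₁ = a₀ * b₁) (e₂ : x₂ = a₁ * b₀) (e₃ : x₃ = a₁ * b₁) :
    ∃ a₀ a₁ b₀ b₁ : ℂ,
      Complex.normSq a₀ + Complex.normSq a₁ = 1 ∧
      Complex.normSq b₀ + Complex.normSq b₁ = 1 ∧
      x₀ = a₀ * b₀ ∧ x₁ = a₀ * b₁ ∧ x₂ = a₁ * b₀ ∧ x₃ = a₁ * b₁ := by
  set A := Complex.normSq a₀ + Complex.normSq a₁
  set B := Complex.normSq b₀ + Complex.normSq b₁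
  have hAB : A * B = 1 := by
    subst e₀ e₁ e₂ e₃
    simp only [Complex.normSq_mul] at h
    linear_combination h
  have hA : 0 < A := pos_of_mul_pos_left (hAB ▸ one_pos)
    (add_nonneg (Complex.normSq_nonneg _) (Complex.normSq_nonneg _))
  set r := √A
  have hr : r ≠ 0 := (sqrt_pos.mpr hA).ne'
  have hr2 : r ^ 2 = A := sq_sqrt hA.le
  have hrC : (r : ℂ) ≠ 0 := Complex.ofReal_ne_zero.mpr hr
  refine ⟨a₀ / r, a₁ / r, r * b₀, r * b₁, ?_, ?_, ?_, ?_, ?_, ?_⟩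
  · simp only [Complex.normSq_div, Complex.normSq_ofReal]
    field_simp
    linear_combination -hr2
  · simp only [Complex.normSq_mul, Complex.normSq_ofReal]
    linear_combination B * hr2 + hAB
  all_goals field_simp; assumption

/-- For a unit vector x ∈ ℂ⁴, the reduced von Neumann entropy
E = -λ₀ log₂ λ₀ - λ₁ log₂ λ₁ (eigenvalues λ₀ = (1-s)/2, λ₁ = (1+s)/2 of the partial
trace, s = √(1 - 4|x₀x₃-x₁x₂|²)) vanishes iff x₀x₃ = x₁x₂, iff x is separable. -/
theorem stmt_19 (x₀ x₁ x₂ x₃ : ℂ)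
    (h : Complex.normSq x₀ + Complex.normSq x₁ + Complex.normSq x₂ + Complex.normSq x₃ = 1) :
    let s : ℝ := Real.sqrt (1 - 4 * Complex.normSq (x₀ * x₃ - x₁ * x₂))
    let l₀ : ℝ := (1 - s) / 2
    let l₁ : ℝ := (1 + s) / 2
    let E : ℝ := -(l₀ * Real.logb 2 l₀) - l₁ * Real.logb 2 l₁
    (E = 0 ↔ x₀ * x₃ = x₁ * x₂) ∧
    (E = 0 ↔ ∃ a₀ a₁ b₀ b₁ : ℂ,
        Complex.normSq a₀ + Complex.normSq a₁ = 1 ∧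
        Complex.normSq b₀ + Complex.normSq b₁ = 1 ∧
        x₀ = a₀ * b₀ ∧ x₁ = a₀ * b₁ ∧ x₂ = a₁ * b₀ ∧ x₃ = a₁ * b₁) := by
  intro s l₀ l₁ E
  have hE : E = binEntropy l₀ / log 2 := by
    have hl₁ : l₁ = 1 - l₀ := by simp only [l₀, l₁]; ring
    simp only [E, hl₁, binEntropy_div_log_two_eq]
  have hdet : E = 0 ↔ x₀ * x₃ = x₁ * x₂ := by
    rw [hE, div_eq_zero_iff, or_iff_left (log_pos one_lt_two).ne',
      binEntropy_one_sub_sqrt_div_two_eq_zero_iff, sub_eq_self, mul_eq_zero,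
      or_iff_right four_ne_zero, Complex.normSq_eq_zero, sub_eq_zero]
  refine ⟨hdet, hdet.trans ⟨fun hx ↦ ?_, ?_⟩⟩
  · obtain ⟨a₀, a₁, b₀, b₁, e₀, e₁, e₂, e₃⟩ := exists_mul_eq_of_mul_eq_mul hx
    exact exists_normSq_add_normSq_eq_one_of_mul_eq h e₀ e₁ e₂ e₃
  · rintro ⟨a₀, a₁, b₀, b₁, -, -, rfl, rfl, rfl, rfl⟩
    ring
end
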